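/- Let Φ = (φ_1,…,φ_{d+1}) be an equiangular tight frame of d+1 vectors in ℂ^d with d ≥ 2. Then Φ is a simplex: for all pairwise distinct indices j, k, ℓ, the triple product TP(j,k,ℓ) = ⟨φ_j,φ_k⟩⟨φ_k,φ_ℓ⟩⟨φ_ℓ,φ_j⟩ is real and negative. -/

import Mathlib

open scoped ComplexInnerProductSpace

noncomputable section

/-- `(φ_1, …, φ_n)` is an equiangular tight frame (ETF) for `ℂ^d`. -/
def IsETF (d n : ℕ) (φ : Fin n → EuclideanSpace ℂ (Fin d)) : Prop :=
  (∀ x : EuclideanSpace ℂ (Fin d), x = ((d : ℂ) / (n : ℂ)) • ∑ j, ⟪φ j, x⟫ • φ j) ∧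
  (∀ j, ‖φ j‖ = 1) ∧
  (∃ α : ℝ, 0 ≤ α ∧ ∀ j k, j ≠ k → ‖⟪φ j, φ k⟫‖ = α)

/-- The triple product `TP(j,k,ℓ) = ⟨φ_j,φ_k⟩⟨φ_k,φ_ℓ⟩⟨φ_ℓ,φ_j⟩`. -/
def TP {d n : ℕ} (φ : Fin n → EuclideanSpace ℂ (Fin d)) (j k l : Fin n) : ℂ :=
  ⟪φ j, φ k⟫ * ⟪φ k, φ l⟫ * ⟪φ l, φ j⟫

/-!
The Gram matrix `G` of an ETF of `n` vectors in `ℂ^d` satisfies `d • G² = n • G`. Its diagonal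
gives the Welch bound `d (1 + (n - 1) α²) = n`, so `α = 1/d` when `n = d + 1`. Multiplying the
`(j, l)` entry by `G_{lj}` shows that the `d - 1` triple products `TP(j,i,l)`, `i ∉ {j, l}`, sum to
`-(d - 1)/d³`, while each has modulus `α³ = 1/d³`: equality in the triangle inequality forces every
one of them to equal `-1/d³`.
-/

open Finset

theorem Complex.eq_neg_of_norm_le_of_sum_eq {ι : Type*} {s : Finset ι} {z : ι → ℂ} {r : ℝ}
    (hz : ∀ i ∈ s, ‖z i‖ ≤ r) (hsum : ∑ i ∈ s, z i = -(#s * r)) :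
    ∀ i ∈ s, z i = -r := by
  have hre_ge : ∀ i ∈ s, -r ≤ (z i).re := fun i hi =>
    (neg_le_neg (hz i hi)).trans (abs_le.mp (abs_re_le_norm (z i))).1
  have hre : ∀ i ∈ s, -r = (z i).re := by
    refine (sum_eq_sum_iff_of_le hre_ge).mp ?_
    rw [← re_sum, hsum, sum_const, nsmul_eq_mul]
    simp
  intro i hi
  have hnorm : |(z i).re| = ‖z i‖ := by
    refine le_antisymm (abs_re_le_norm _) ((hz i hi).trans ?_)
    rw [← hre i hi, abs_neg]
    exact le_abs_self r
  apply Complex.ext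
  · simp [← hre i hi]
  · simpa using abs_re_eq_norm.mp hnorm

namespace IsETF

variable {d n : ℕ} {φ : Fin n → EuclideanSpace ℂ (Fin d)}

theorem inner_self_eq_one (h : IsETF d n φ) (j : Fin n) : ⟪φ j, φ j⟫ = 1 := by
  rw [inner_self_eq_norm_sq_to_K, h.2.1 j]
  norm_num

theorem norm_inner_eq_norm_inner (h : IsETF d n φ) {j k j' k' : Fin n} (hjk : j ≠ k)
    (hjk' : j' ≠ k') : ‖⟪φ j, φ k⟫‖ = ‖⟪φ j', φ k'⟫‖ := by
  obtain ⟨-, -, α, -, hα⟩ := h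
  rw [hα j k hjk, hα j' k' hjk']

theorem mul_gram_sq (h : IsETF d n φ) (j l : Fin n) :
    (d : ℂ) * ∑ i, ⟪φ j, φ i⟫ * ⟪φ i, φ l⟫ = n * ⟪φ j, φ l⟫ := by
  have hn : (n : ℂ) ≠ 0 := Nat.cast_ne_zero.mpr (Fin.pos j).ne'
  have hexp : ⟪φ j, φ l⟫ = (d / n : ℂ) * ∑ i, ⟪φ j, φ i⟫ * ⟪φ i, φ l⟫ := by
    conv_lhs => rw [h.1 (φ l)]
    simp only [inner_smul_right, inner_sum, mul_comm]
  rw [hexp]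
  field_simp

theorem welch_eq (h : IsETF d n φ) {j k : Fin n} (hjk : j ≠ k) :
    (d : ℝ) * (1 + (n - 1) * ‖⟪φ j, φ k⟫‖ ^ 2) = n := by
  have hdiag := h.mul_gram_sq j j
  rw [h.inner_self_eq_one, mul_one, ← sum_erase_add _ _ (mem_univ j), h.inner_self_eq_one,
    sum_congr rfl fun i hi => by
      rw [← inner_conj_symm (φ i) (φ j), Complex.mul_conj',
        h.norm_inner_eq_norm_inner (ne_of_mem_erase hi).symm hjk]] at hdiag
  rw [sum_const, card_erase_of_mem (mem_univ j), card_univ, Fintype.card_fin, nsmul_eq_mul,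
    Nat.cast_sub (Fin.pos j)] at hdiag
  exact_mod_cast (show ((d * (1 + (n - 1) * ‖⟪φ j, φ k⟫‖ ^ 2) : ℝ) : ℂ) = n by
    push_cast
    linear_combination hdiag)

theorem mul_sum_TP_erase (h : IsETF d n φ) {j l : Fin n} (hjl : j ≠ l) :
    (d : ℂ) * ∑ i ∈ (univ.erase j).erase l, TP φ j i l = (n - 2 * d) * ‖⟪φ j, φ l⟫‖ ^ 2 := by
  have hl : l ∈ univ.erase j := mem_erase.mpr ⟨hjl.symm, mem_univ l⟩
  have hgram := h.mul_gram_sq j l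
  rw [← add_sum_erase _ _ (mem_univ j), ← add_sum_erase _ _ hl, h.inner_self_eq_one,
    h.inner_self_eq_one] at hgram
  have hTP : ∑ i ∈ (univ.erase j).erase l, TP φ j i l
      = (∑ i ∈ (univ.erase j).erase l, ⟪φ j, φ i⟫ * ⟪φ i, φ l⟫) * ⟪φ l, φ j⟫ := by
    rw [sum_mul]
    rfl
  rw [hTP, ← Complex.mul_conj', inner_conj_symm]
  linear_combination ⟪φ l, φ j⟫ * hgram

end IsETF

namespace IsETF

variable {d : ℕ} {φ : Fin (d + 1) → EuclideanSpace ℂ (Fin d)}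

theorem norm_inner_eq_inv (h : IsETF d (d + 1) φ) {j k : Fin (d + 1)} (hjk : j ≠ k) :
    ‖⟪φ j, φ k⟫‖ = (d : ℝ)⁻¹ := by
  have hsq : ((d : ℝ) * ‖⟪φ j, φ k⟫‖) ^ 2 = 1 := by
    have := h.welch_eq hjk
    push_cast at this
    linear_combination this
  exact eq_inv_of_mul_eq_one_right ((pow_eq_one_iff_of_nonneg (by positivity) two_ne_zero).mp hsq)

theorem norm_TP (h : IsETF d (d + 1) φ) {j k l : Fin (d + 1)} (hjk : j ≠ k)
    (hjl : j ≠ l) (hkl : k ≠ l) : ‖TP φ j k l‖ = ((d : ℝ) ^ 3)⁻¹ := by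
  rw [TP, norm_mul, norm_mul, h.norm_inner_eq_inv hjk, h.norm_inner_eq_inv hkl,
    h.norm_inner_eq_inv hjl.symm]
  ring

theorem sum_TP_erase (h : IsETF d (d + 1) φ) {j l : Fin (d + 1)} (hjl : j ≠ l) :
    ∑ i ∈ (univ.erase j).erase l, TP φ j i l
      = -(#((univ.erase j).erase l) * ((((d : ℝ) ^ 3)⁻¹ : ℝ) : ℂ)) := by
  have hd : d ≠ 0 := by rintro rfl; exact hjl (Fin.subsingleton_one.elim j l)
  have hsum := h.mul_sum_TP_erase hjl
  rw [h.norm_inner_eq_inv hjl] at hsum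
  rw [card_erase_of_mem (mem_erase.mpr ⟨hjl.symm, mem_univ l⟩),
    card_erase_of_mem (mem_univ j), card_univ, Fintype.card_fin]
  have hdC : (d : ℂ) ≠ 0 := Nat.cast_ne_zero.mpr hd
  push_cast [Nat.add_sub_cancel, Nat.cast_sub (Nat.one_le_iff_ne_zero.mpr hd)] at hsum ⊢
  field_simp at hsum ⊢
  linear_combination hsum

end IsETF

theorem etf_succ_is_simplex {d : ℕ}
    (φ : Fin (d + 1) → EuclideanSpace ℂ (Fin d)) (hETF : IsETF d (d + 1) φ) :
    ∀ j k l : Fin (d + 1), j ≠ k → j ≠ l → k ≠ l →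
      ∃ r : ℝ, r < 0 ∧ TP φ j k l = (r : ℂ) := by
  intro j k l hjk hjl hkl
  have hd : 0 < d := Nat.pos_of_ne_zero (by rintro rfl; exact hjk (Fin.subsingleton_one.elim j k))
  have hk : k ∈ (univ.erase j).erase l := mem_erase.mpr ⟨hkl, mem_erase.mpr ⟨hjk.symm, mem_univ k⟩⟩
  have hTP := Complex.eq_neg_of_norm_le_of_sum_eq
    (fun i hi => (hETF.norm_TP (ne_of_mem_erase (mem_of_mem_erase hi)).symm hjl
      (ne_of_mem_erase hi)).le) (hETF.sum_TP_erase hjl) k hk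
  exact ⟨-((d : ℝ) ^ 3)⁻¹, by simp [hd], by rw [hTP, Complex.ofReal_neg]⟩
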